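/- arXiv:2310.04236 — 4 statements merged into one kernel-verified Lean document; each statement's English description precedes it below -/
import Mathlib

section
/- For every set P of n points in the unit square [0,1]², there exists a closed tour visiting all points of P of total Euclidean length O(√n); concretely, length at most 2√n + 4 suffices. -/
open Finset

noncomputable def stripIdx (m : ℕ) (y : ℝ) : ℕ := min (⌊y * m⌋.toNat) (m - 1)

noncomputable def offs (k : ℕ) (x : ℝ) : ℝ := if Even k then x else 1 - x

noncomputable def snake (m : ℕ) (p : EuclideanSpace ℝ (Fin 2)) : ℝ :=
  (stripIdx m (p 1)) * (1 + 1 / m) + offs (stripIdx m (p 1)) (p 0)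

lemma stripIdx_le (m : ℕ) (y : ℝ) : stripIdx m y ≤ m - 1 := min_le_right _ _

lemma strip_mem {m : ℕ} (hm : 0 < m) {y : ℝ} (hy : y ∈ Set.Icc (0:ℝ) 1) :
    (stripIdx m y : ℝ) / m ≤ y ∧ y ≤ ((stripIdx m y : ℝ) + 1) / m := by
  obtain ⟨hy0, hy1⟩ := hy
  have hm' : (0:ℝ) < m := by exact_mod_cast hm
  have h0 : (0:ℤ) ≤ ⌊y * m⌋ := Int.floor_nonneg.2 (by positivity)
  have hfl : ((⌊y * m⌋.toNat : ℕ) : ℝ) = (⌊y * m⌋ : ℝ) := by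
    exact_mod_cast Int.toNat_of_nonneg h0
  constructor
  · have h1 : (stripIdx m y : ℝ) ≤ (⌊y * m⌋.toNat : ℕ) := by
      exact_mod_cast Nat.cast_le.2 (min_le_left _ _)
    have h2 : ((⌊y * m⌋ : ℤ) : ℝ) ≤ y * m := Int.floor_le _
    rw [div_le_iff₀ hm']
    calc (stripIdx m y : ℝ) ≤ _ := h1
      _ = _ := hfl
      _ ≤ y * m := h2
  · rcases le_or_gt (⌊y * m⌋.toNat) (m-1) with h | h
    · have : stripIdx m y = ⌊y * m⌋.toNat := min_eq_left h
      rw [this, le_div_iff₀ hm']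
      have := Int.lt_floor_add_one (y * m)
      rw [← hfl] at this
      linarith
    · have : stripIdx m y = m - 1 := min_eq_right (le_of_lt h)
      rw [this, le_div_iff₀ hm']
      have : ((m:ℝ) - 1) + 1 = m := by ring
      have hcast : ((m - 1 : ℕ) : ℝ) = (m:ℝ) - 1 := by
        have : 1 ≤ m := hm
        push_cast [Nat.cast_sub this]; ring
      rw [hcast]
      nlinarith

lemma offs_mem {k : ℕ} {x : ℝ} (hx : x ∈ Set.Icc (0:ℝ) 1) : offs k x ∈ Set.Icc (0:ℝ) 1 := by
  obtain ⟨h0, h1⟩ := hx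
  unfold offs; split <;> constructor <;> linarith

lemma offs_abs (k : ℕ) (x x' : ℝ) : |offs k x - offs k x'| = |x - x'| := by
  unfold offs; split
  · rfl
  · rw [show (1 - x) - (1 - x') = -(x - x') by ring, abs_neg]

lemma offs_succ (k : ℕ) (x : ℝ) : offs (k+1) x = 1 - offs k x := by
  unfold offs
  by_cases h : Even k
  · simp [h, Nat.even_add_one]
  · simp [h, Nat.even_add_one]

lemma dist_le_l1 (p q : EuclideanSpace ℝ (Fin 2)) :
    dist p q ≤ |p 0 - q 0| + |p 1 - q 1| := by
  rw [EuclideanSpace.dist_eq, Fin.sum_univ_two]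
  have h1 : (0:ℝ) ≤ |p 0 - q 0| := abs_nonneg _
  have h2 : (0:ℝ) ≤ |p 1 - q 1| := abs_nonneg _
  have : dist (p 0) (q 0) ^ 2 + dist (p 1) (q 1) ^ 2 ≤ (|p 0 - q 0| + |p 1 - q 1|)^2 := by
    rw [Real.dist_eq, Real.dist_eq]
    nlinarith [sq_abs (p 0 - q 0), sq_abs (p 1 - q 1)]
  calc Real.sqrt _ ≤ Real.sqrt ((|p 0 - q 0| + |p 1 - q 1|)^2) := Real.sqrt_le_sqrt this
    _ = _ := Real.sqrt_sq (by positivity)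

lemma snake_nonneg (m : ℕ) (p : EuclideanSpace ℝ (Fin 2)) (hp : ∀ t, p t ∈ Set.Icc (0:ℝ) 1) :
    0 ≤ snake m p := by
  unfold snake
  have h1 := (offs_mem (k := stripIdx m (p 1)) (hp 0)).1
  have h2 : (0:ℝ) ≤ (stripIdx m (p 1) : ℝ) := Nat.cast_nonneg _
  have h3 : (0:ℝ) ≤ 1 + 1/(m:ℝ) := by positivity
  nlinarith

lemma snake_le (m : ℕ) (hm : 0 < m) (p : EuclideanSpace ℝ (Fin 2))
    (hp : ∀ t, p t ∈ Set.Icc (0:ℝ) 1) :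
    snake m p ≤ ((m:ℝ) - 1) * (1 + 1/m) + 1 := by
  unfold snake
  have h1 := (offs_mem (k := stripIdx m (p 1)) (hp 0)).2
  have h2 : (stripIdx m (p 1) : ℝ) ≤ (m:ℝ) - 1 := by
    have := stripIdx_le m (p 1)
    have h3 : ((m - 1 : ℕ) : ℝ) = (m:ℝ) - 1 := by
      push_cast [Nat.cast_sub hm]; ring
    rw [← h3]; exact_mod_cast this
  have h3 : (0:ℝ) ≤ 1 + 1/(m:ℝ) := by positivity
  nlinarith

lemma dist_le_snake {m : ℕ} (hm : 0 < m) (p q : EuclideanSpace ℝ (Fin 2))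
    (hp : ∀ t, p t ∈ Set.Icc (0:ℝ) 1) (hq : ∀ t, q t ∈ Set.Icc (0:ℝ) 1)
    (hle : snake m p ≤ snake m q) :
    dist p q ≤ snake m q - snake m p + 1/m := by
  have hm' : (0:ℝ) < m := by exact_mod_cast hm
  set kp := stripIdx m (p 1) with hkp
  set kq := stripIdx m (q 1) with hkq
  have hyp := strip_mem hm (hp 1)
  have hyq := strip_mem hm (hq 1)
  have hop := offs_mem (k := kp) (hp 0)
  have hoq := offs_mem (k := kq) (hq 0)
  have hd := dist_le_l1 p q
  -- kp ≤ kq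
  have hk : kp ≤ kq := by
    by_contra h
    push_neg at h
    have h1 : (kq:ℝ) + 1 ≤ (kp:ℝ) := by exact_mod_cast h
    have : snake m q < snake m p := by
      unfold snake
      rw [← hkp, ← hkq]
      obtain ⟨a0, a1⟩ := hop
      obtain ⟨b0, b1⟩ := hoq
      have : (0:ℝ) < 1/(m:ℝ) := by positivity
      nlinarith
    linarith
  have hxp := hp 0
  have hxq := hq 0
  -- vertical bound
  have hy : |p 1 - q 1| ≤ ((kq:ℝ) - kp + 1) / m := by
    have e1 : (kp:ℝ) ≤ p 1 * m := (div_le_iff₀ hm').mp hyp.1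
    have e2 : p 1 * m ≤ (kp:ℝ) + 1 := (le_div_iff₀ hm').mp hyp.2
    have e3 : (kq:ℝ) ≤ q 1 * m := (div_le_iff₀ hm').mp hyq.1
    have e4 : q 1 * m ≤ (kq:ℝ) + 1 := (le_div_iff₀ hm').mp hyq.2
    have hkk : (kp:ℝ) ≤ (kq:ℝ) := by exact_mod_cast hk
    rw [abs_sub_le_iff]
    constructor
    · rw [le_div_iff₀ hm']; nlinarith
    · rw [le_div_iff₀ hm']; nlinarith
  rcases Nat.lt_or_ge kq (kp + 1) with h1 | h1
  · -- same strip
    have hkeq : kq = kp := by omega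
    have hsnake : snake m q - snake m p = offs kp (q 0) - offs kp (p 0) := by
      unfold snake; rw [← hkp, ← hkq, hkeq]; ring
    have hx : |p 0 - q 0| = |offs kp (p 0) - offs kp (q 0)| := (offs_abs kp _ _).symm
    have habs : |offs kp (p 0) - offs kp (q 0)| = offs kp (q 0) - offs kp (p 0) := by
      rw [abs_sub_comm, abs_of_nonneg]; linarith [hsnake ▸ sub_nonneg.2 hle]
    rw [hsnake]
    have : ((kq:ℝ) - kp + 1)/m = 1/m := by rw [hkeq]; ring_nf
    rw [this] at hy
    calc dist p q ≤ |p 0 - q 0| + |p 1 - q 1| := hd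
      _ ≤ (offs kp (q 0) - offs kp (p 0)) + 1/m := by rw [hx, habs]; linarith
  rcases Nat.lt_or_ge kq (kp + 2) with h2 | h2
  · -- adjacent strips
    have hkeq : kq = kp + 1 := by omega
    have hsucc : offs kq (q 0) = 1 - offs kp (q 0) := by rw [hkeq, offs_succ]
    have hsnake : snake m q - snake m p
        = (1 + 1/m) + (1 - offs kp (q 0)) - offs kp (p 0) := by
      unfold snake; rw [← hkp, ← hkq, hsucc, hkeq]; push_cast; ring
    have hx : |p 0 - q 0| = |offs kp (p 0) - offs kp (q 0)| := (offs_abs kp _ _).symm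
    have hxb : |offs kp (p 0) - offs kp (q 0)| ≤ 2 - offs kp (p 0) - offs kp (q 0) := by
      have hoq' : offs kp (q 0) ∈ Set.Icc (0:ℝ) 1 := offs_mem (hq 0)
      rw [abs_le]
      obtain ⟨a0, a1⟩ := hop; obtain ⟨b0, b1⟩ := hoq'
      constructor <;> linarith
    have hy' : |p 1 - q 1| ≤ 2 / m := by
      have : ((kq:ℝ) - kp + 1)/m = 2/m := by rw [hkeq]; push_cast; ring_nf
      rw [this] at hy; exact hy
    rw [hsnake]
    calc dist p q ≤ |p 0 - q 0| + |p 1 - q 1| := hd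
      _ ≤ (2 - offs kp (p 0) - offs kp (q 0)) + 2/m := by rw [hx]; linarith
      _ ≤ (1 + 1/m) + (1 - offs kp (q 0)) - offs kp (p 0) + 1/m := by
          rw [div_le_iff₀ hm'] at *; ring_nf; nlinarith
  · -- far strips
    have hdd : (kp:ℝ) + 2 ≤ (kq:ℝ) := by exact_mod_cast h2
    have hsnake : snake m q - snake m p
        = ((kq:ℝ) - kp) * (1 + 1/m) + offs kq (q 0) - offs kp (p 0) := by
      unfold snake; rw [← hkp, ← hkq]; ring
    have hx : |p 0 - q 0| ≤ 1 := by
      obtain ⟨a0, a1⟩ := hxp; obtain ⟨b0, b1⟩ := hxq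
      rw [abs_le]; constructor <;> linarith
    obtain ⟨a0, a1⟩ := hop; obtain ⟨b0, b1⟩ := hoq
    have hinv : (0:ℝ) < 1/m := by positivity
    rw [hsnake]
    have hy2 : |p 1 - q 1| ≤ ((kq:ℝ) - kp + 1) * (1/m) := by
      rw [mul_one_div]; exact hy
    calc dist p q ≤ |p 0 - q 0| + |p 1 - q 1| := hd
      _ ≤ 1 + ((kq:ℝ) - kp + 1) * (1/m) := by linarith
      _ ≤ ((kq:ℝ) - kp) * (1 + 1/m) + offs kq (q 0) - offs kp (p 0) + 1/m := by nlinarith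


/-- Every set of `n` points in the unit square admits a closed tour of total
Euclidean length at most `2√n + 4` (in particular `O(√n)`). -/
theorem tsp_sqrt_bound {n : ℕ} [NeZero n] (P : Fin n → EuclideanSpace ℝ (Fin 2))
    (hP : ∀ (i : Fin n) (t : Fin 2), P i t ∈ Set.Icc (0 : ℝ) 1) :
    ∃ σ : Equiv.Perm (Fin n),
      ∑ i : Fin n, dist (P (σ i)) (P (σ (i + 1))) ≤ 2 * Real.sqrt n + 4 := by
  obtain ⟨k, rfl⟩ : ∃ k, n = k + 1 :=
    ⟨n - 1, (Nat.succ_pred_eq_of_pos (Nat.pos_of_ne_zero (NeZero.ne n))).symm⟩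
  set s := Nat.sqrt (k + 1) with hs
  set m := s + 1 with hmdef
  have hm : 0 < m := Nat.succ_pos _
  have hm' : (0:ℝ) < m := by exact_mod_cast hm
  set f : Fin (k+1) → ℝ := fun i => snake m (P i) with hf
  set σ := Tuple.sort f with hσ
  have hmono : Monotone (f ∘ σ) := Tuple.monotone_sort f
  refine ⟨σ, ?_⟩
  set S := Real.sqrt (k+1) with hS
  have hS0 : 0 ≤ S := Real.sqrt_nonneg _
  have hS3 : S * S = (k+1:ℝ) := Real.mul_self_sqrt (by positivity)
  have hS2 : S ≤ (m:ℝ) := by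
    have h1 : ((k:ℝ)+1) ≤ ((m:ℝ))^2 := by
      have := Nat.lt_succ_sqrt (k+1)
      have : (k+1 : ℕ) ≤ m^2 := by
        have := Nat.lt_succ_sqrt (k+1); push_cast [hmdef]; nlinarith [Nat.lt_succ_sqrt (k+1)]
      exact_mod_cast this
    calc S ≤ Real.sqrt ((m:ℝ)^2) := Real.sqrt_le_sqrt h1
      _ = m := Real.sqrt_sq (le_of_lt hm')
  -- edge bounds
  rw [Fin.sum_univ_castSucc]
  have hstep : ∀ i : Fin k,
      dist (P (σ i.castSucc)) (P (σ (i.castSucc + 1)))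
        ≤ (f (σ i.succ) - f (σ i.castSucc)) + 1/m := by
    intro i
    have hcs : (i.castSucc : Fin (k+1)) + 1 = i.succ := by
      apply Fin.ext
      rw [Fin.val_add_one_of_lt (Fin.castSucc_lt_last i)]
      simp
    rw [hcs]
    exact dist_le_snake hm _ _ (hP _) (hP _) (hmono (Fin.castSucc_le_succ i))
  have hlast : dist (P (σ (Fin.last k))) (P (σ (Fin.last k + 1))) ≤ 2 := by
    have h := dist_le_l1 (P (σ (Fin.last k))) (P (σ (Fin.last k + 1)))
    have h1 := hP (σ (Fin.last k)) 0
    have h2 := hP (σ (Fin.last k)) 1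
    have h3 := hP (σ (Fin.last k + 1)) 0
    have h4 := hP (σ (Fin.last k + 1)) 1
    simp only [Set.mem_Icc] at h1 h2 h3 h4
    have e1 : |P (σ (Fin.last k)) 0 - P (σ (Fin.last k + 1)) 0| ≤ 1 := by
      rw [abs_le]; constructor <;> linarith [h1.1, h1.2, h3.1, h3.2]
    have e2 : |P (σ (Fin.last k)) 1 - P (σ (Fin.last k + 1)) 1| ≤ 1 := by
      rw [abs_le]; constructor <;> linarith [h2.1, h2.2, h4.1, h4.2]
    linarith
  -- telescoping
  set G : ℕ → ℝ := fun j => f (σ (⟨min j k, by omega⟩ : Fin (k+1))) with hG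
  have hGsucc : ∀ i : Fin k, G (↑i + 1) = f (σ i.succ) := by
    intro i
    have : (⟨min (↑i + 1) k, by omega⟩ : Fin (k+1)) = i.succ := by
      apply Fin.ext; simp [Nat.min_eq_left (by omega : (i:ℕ) + 1 ≤ k)]
    simp only [hG, this]
  have hGcast : ∀ i : Fin k, G ↑i = f (σ i.castSucc) := by
    intro i
    have : (⟨min (↑i) k, by omega⟩ : Fin (k+1)) = i.castSucc := by
      apply Fin.ext; simp [Nat.min_eq_left (by omega : (i:ℕ) ≤ k)]
    simp only [hG, this]
  have htel : ∑ i : Fin k, ((f (σ i.succ) - f (σ i.castSucc)) + 1/m)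
      = (G k - G 0) + k * (1/m) := by
    rw [Finset.sum_add_distrib, Finset.sum_const, card_univ, Fintype.card_fin, nsmul_eq_mul]
    congr 1
    have : ∀ i : Fin k, f (σ i.succ) - f (σ i.castSucc) = G (↑i + 1) - G ↑i := by
      intro i; rw [hGsucc, hGcast]
    rw [Finset.sum_congr rfl (fun i _ => this i),
      Fin.sum_univ_eq_sum_range (fun j => G (j+1) - G j) k, Finset.sum_range_sub]
  have hsum : ∑ i : Fin k, dist (P (σ i.castSucc)) (P (σ (i.castSucc + 1)))
      ≤ (G k - G 0) + k * (1/m) := by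
    rw [← htel]; exact Finset.sum_le_sum (fun i _ => hstep i)
  -- bounds on G
  have hGk : G k ≤ ((m:ℝ) - 1) * (1 + 1/m) + 1 := snake_le m hm _ (hP _)
  have hG0 : 0 ≤ G 0 := snake_nonneg m _ (hP _)
  -- numeric endgame
  have hub : ((m:ℝ) - 1) * (1 + 1/m) ≤ m := by
    have : ((m:ℝ) - 1) * (1 + 1/m) = m - 1/m := by field_simp; ring
    rw [this]
    have : (0:ℝ) < 1/m := by positivity
    linarith
  have hkm : (k:ℝ) * (1/m) ≤ S := by
    rw [mul_one_div, div_le_iff₀ hm']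
    nlinarith
  have hms : (m:ℝ) ≤ S + 1 := by
    have h1 : (s:ℝ) ≤ S := by
      rw [hS, show (s:ℝ) = Real.sqrt ((s:ℝ)^2) from (Real.sqrt_sq (Nat.cast_nonneg s)).symm]
      apply Real.sqrt_le_sqrt
      have h2 : (s*s : ℕ) ≤ k+1 := by have := Nat.sqrt_le' (k+1); rw [hs]; nlinarith
      have h3 : ((s*s : ℕ) : ℝ) ≤ ((k+1 : ℕ) : ℝ) := by exact_mod_cast h2
      push_cast at h3 ⊢
      nlinarith
    push_cast [hmdef]; linarith
  have hcast : ((k+1 : ℕ) : ℝ) = (k:ℝ) + 1 := by push_cast; ring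
  rw [hcast, ← hS]
  linarith
end

section
/- If a point set P ⊂ [0,1]² is k-increasing (avoids the decreasing pattern of length k+1), then there is a tour of P of Euclidean length at most 3k + 2·√2 (in particular O(k)). -/
/-!
Order the points by `p < q` iff `q` lies strictly to the lower right of `p`; its chains are the
decreasing patterns, so the heights (*levels*) in this order are `< k`, and points of equal level
form an increasing chain. Visit the levels in increasing order, the even ones left to right and
the odd ones right to left, and close the tour. The potential `2 · level + (x + y)` on even levels
and `2 · level + 2 - (x + y)` on odd levels lies in `[0, 2k]` and grows along the open path by at
least the `ℓ¹`-length of each step: within a level the step is monotone; when the level goes up by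
one, the potential grows by `(x_p + x_q) + (y_p + y_q)` or `(2 - x_p - x_q) + (2 - y_p - y_q)`,
and both bound `|x_p - x_q| + |y_p - y_q|` in the unit square; a larger jump gains at least `2`.
So the open path has length at most `2k`, and the closing edge adds at most `√2`.
-/

open Order Set

theorem Fin.sum_succ_sub_castSucc {M : Type*} [AddCommGroup M] {m : ℕ} (f : Fin (m + 1) → M) :
    ∑ i : Fin m, (f i.succ - f i.castSucc) = f (Fin.last m) - f 0 := by
  induction m with
  | zero => simp
  | succ m ih =>
    have := ih (f ∘ Fin.castSucc)
    simp only [Function.comp_apply, Fin.castSucc_succ] at this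
    rw [Fin.sum_univ_castSucc, this]
    simp

theorem Fin.sum_dist_add_one_le {X : Type*} [PseudoMetricSpace X] {m : ℕ} (x : Fin (m + 1) → X)
    (Φ : Fin (m + 1) → ℝ)
    (hΦ : ∀ i : Fin m, dist (x i.castSucc) (x i.succ) ≤ Φ i.succ - Φ i.castSucc) :
    ∑ i, dist (x i) (x (i + 1)) ≤ Φ (Fin.last m) - Φ 0 + dist (x (Fin.last m)) (x 0) := by
  simp only [Fin.sum_univ_castSucc, Fin.coeSucc_eq_succ, Fin.last_add_one]
  gcongr
  exact (Finset.sum_le_sum fun i _ => hΦ i).trans_eq (Fin.sum_succ_sub_castSucc Φ)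

namespace KIncreasingTour

theorem abs_sub_le_of_mem_Icc {a b : ℝ} (ha : a ∈ Icc 0 1) (hb : b ∈ Icc 0 1) :
    |a - b| ≤ a + b ∧ |a - b| ≤ 2 - (a + b) :=
  ⟨abs_sub_le_iff.2 ⟨by linarith [hb.1], by linarith [ha.1]⟩,
    abs_sub_le_iff.2 ⟨by linarith [ha.2], by linarith [hb.2]⟩⟩

theorem dist_eq_sqrt (x y : EuclideanSpace ℝ (Fin 2)) :
    dist x y = √((x 0 - y 0) ^ 2 + (x 1 - y 1) ^ 2) := by
  simp only [EuclideanSpace.dist_eq, Fin.sum_univ_two, Real.dist_eq, sq_abs]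

theorem dist_le_abs_add_abs (x y : EuclideanSpace ℝ (Fin 2)) :
    dist x y ≤ |x 0 - y 0| + |x 1 - y 1| := by
  rw [dist_eq_sqrt, Real.sqrt_le_iff, ← sq_abs (x 0 - y 0), ← sq_abs (x 1 - y 1)]
  exact ⟨by positivity, by nlinarith [abs_nonneg (x 0 - y 0), abs_nonneg (x 1 - y 1)]⟩

theorem dist_le_of_le {x y : EuclideanSpace ℝ (Fin 2)} (h0 : x 0 ≤ y 0) (h1 : x 1 ≤ y 1) :
    dist x y ≤ y 0 + y 1 - (x 0 + x 1) := by
  have := dist_le_abs_add_abs x y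
  rw [abs_sub_comm (x 0), abs_sub_comm (x 1), abs_of_nonneg (sub_nonneg.2 h0),
    abs_of_nonneg (sub_nonneg.2 h1)] at this
  linarith

theorem dist_le_sqrt_two {x y : EuclideanSpace ℝ (Fin 2)}
    (hx : ∀ t, x t ∈ Icc (0 : ℝ) 1) (hy : ∀ t, y t ∈ Icc (0 : ℝ) 1) : dist x y ≤ √2 := by
  have h0 := abs_sub_le_of_mem_Icc (hx 0) (hy 0)
  have h1 := abs_sub_le_of_mem_Icc (hx 1) (hy 1)
  have h0' := (sq_le_one_iff_abs_le_one (x 0 - y 0)).2 (by linarith)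
  have h1' := (sq_le_one_iff_abs_le_one (x 1 - y 1)).2 (by linarith)
  rw [dist_eq_sqrt]
  gcongr
  linarith

variable {ι : Type*}

def DescentOrder (_P : ι → EuclideanSpace ℝ (Fin 2)) : Type _ := ι

instance (P : ι → EuclideanSpace ℝ (Fin 2)) : PartialOrder (DescentOrder P) where
  le i j := i = j ∨ (P i 0 < P j 0 ∧ P j 1 < P i 1)
  lt i j := P i 0 < P j 0 ∧ P j 1 < P i 1
  le_refl _ := Or.inl rfl
  le_trans := by
    rintro i j l (rfl | ⟨hx, hy⟩) (rfl | ⟨hx', hy'⟩)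
    exacts [Or.inl rfl, Or.inr ⟨hx', hy'⟩, Or.inr ⟨hx, hy⟩, Or.inr ⟨hx.trans hx', hy'.trans hy⟩]
  le_antisymm := by
    rintro i j (rfl | ⟨hx, -⟩) (h | ⟨hx', -⟩)
    exacts [rfl, rfl, h.symm, absurd (hx.trans hx') (lt_irrefl _)]
  lt_iff_le_not_ge i j := by
    constructor
    · rintro ⟨hx, hy⟩
      refine ⟨Or.inr ⟨hx, hy⟩, ?_⟩
      rintro (rfl | ⟨hx', -⟩)
      exacts [lt_irrefl _ hx, lt_asymm hx hx']
    · rintro ⟨rfl | h, hn⟩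
      exacts [absurd (Or.inl rfl) hn, h]

-- `toNat` sends an infinite height to `0`; heights are finite under the hypothesis of `coe_level`.
noncomputable def level (P : ι → EuclideanSpace ℝ (Fin 2)) (i : ι) : ℕ :=
  (height (α := DescentOrder P) i).toNat

section Levels

variable {P : ι → EuclideanSpace ℝ (Fin 2)} {k : ℕ}
  (havoid : ¬ ∃ f : Fin (k + 1) → ι,
    StrictMono (fun t => P (f t) 0) ∧ StrictAnti (fun t => P (f t) 1))
include havoid

theorem height_lt (i : ι) : height (α := DescentOrder P) i < k := by
  by_contra! h
  obtain ⟨s, -, rfl⟩ := exists_series_of_le_height (α := DescentOrder P) i h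
  exact havoid ⟨s, fun a b hab => (s.strictMono hab).1, fun a b hab => (s.strictMono hab).2⟩

theorem coe_level (i : ι) : (level P i : ℕ∞) = height (α := DescentOrder P) i :=
  ENat.natCast_toNat (height_lt havoid i).ne_top

theorem level_lt (i : ι) : level P i < k := by
  exact_mod_cast coe_level havoid i ▸ height_lt havoid i

theorem level_lt_level {i j : ι} (hij : P i 0 < P j 0 ∧ P j 1 < P i 1) :
    level P i < level P j := by
  have := height_strictMono (α := DescentOrder P) (x := i) (y := j) hij
    ((height_lt havoid i).trans (ENat.natCast_lt_top k))
  exact_mod_cast coe_level havoid i ▸ coe_level havoid j ▸ this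

theorem lt_of_level_eq {i j : ι} (hy : P i 1 ≠ P j 1) (hlev : level P i = level P j)
    (hx : P i 0 < P j 0) : P i 1 < P j 1 :=
  hy.lt_or_gt.resolve_right fun h => (level_lt_level havoid ⟨hx, h⟩).ne hlev

end Levels

noncomputable def snakeKey (P : ι → EuclideanSpace ℝ (Fin 2)) (i : ι) : ℕ ×ₗ ℝ :=
  toLex (level P i, if Even (level P i) then P i 0 else -P i 0)

noncomputable def snakePotential (P : ι → EuclideanSpace ℝ (Fin 2)) (i : ι) : ℝ :=
  2 * level P i + if Even (level P i) then P i 0 + P i 1 else 2 - (P i 0 + P i 1)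

variable {P : ι → EuclideanSpace ℝ (Fin 2)}

theorem snakeKey_injective (hx : Pairwise fun i j => P i 0 ≠ P j 0) :
    Function.Injective (snakeKey P) := by
  intro i j hij
  obtain ⟨hlev, hcoord⟩ := Prod.ext_iff.1 (congrArg ofLex hij)
  simp only [snakeKey, ofLex_toLex] at hlev hcoord
  rw [hlev] at hcoord
  by_contra hne
  split_ifs at hcoord <;> exact hx hne (by linarith)

theorem snakePotential_mem_Icc {i : ι} (hi : ∀ t, P i t ∈ Icc (0 : ℝ) 1) :
    snakePotential P i ∈ Icc (2 * level P i : ℝ) (2 * level P i + 2) := by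
  have := hi 0; have := hi 1
  simp only [mem_Icc] at *
  unfold snakePotential
  split_ifs <;> constructor <;> linarith

theorem dist_le_snakePotential_sub_of_level_lt {p q : ι} (hp : ∀ t, P p t ∈ Icc (0 : ℝ) 1)
    (hq : ∀ t, P q t ∈ Icc (0 : ℝ) 1) (hlev : level P p < level P q) :
    dist (P p) (P q) ≤ snakePotential P q - snakePotential P p := by
  have hd := dist_le_abs_add_abs (P p) (P q)
  obtain ⟨h0, h0'⟩ := abs_sub_le_of_mem_Icc (hp 0) (hq 0)
  obtain ⟨h1, h1'⟩ := abs_sub_le_of_mem_Icc (hp 1) (hq 1)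
  obtain hnext | hjump : level P q = level P p + 1 ∨ level P p + 2 ≤ level P q := by omega
  · have hcast : (level P q : ℝ) = level P p + 1 := by exact_mod_cast hnext
    unfold snakePotential
    rcases Nat.even_or_odd (level P p) with he | ho
    · rw [if_pos he, if_neg (by rw [hnext, Nat.not_even_iff_odd]; exact he.add_one), hcast]
      linarith
    · rw [if_neg (Nat.not_even_iff_odd.2 ho), if_pos (by rw [hnext]; exact ho.add_one), hcast]
      linarith
  · have hcast : (level P p : ℝ) + 2 ≤ level P q := by exact_mod_cast hjump
    have := (snakePotential_mem_Icc hp).2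
    have := (snakePotential_mem_Icc hq).1
    linarith

theorem dist_le_snakePotential_sub_of_level_eq {k : ℕ}
    (havoid : ¬ ∃ f : Fin (k + 1) → ι,
      StrictMono (fun t => P (f t) 0) ∧ StrictAnti (fun t => P (f t) 1))
    {p q : ι} (hy : P p 1 ≠ P q 1) (hlev : level P p = level P q)
    (hpq : snakeKey P p < snakeKey P q) :
    dist (P p) (P q) ≤ snakePotential P q - snakePotential P p := by
  have hx : if Even (level P p) then P p 0 < P q 0 else P q 0 < P p 0 := by
    have := Prod.Lex.lt_iff.1 hpq
    simp only [snakeKey, ofLex_toLex, hlev, lt_self_iff_false, true_and, false_or] at this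
    rw [hlev]
    split_ifs at this ⊢ <;> linarith
  unfold snakePotential
  rw [← hlev]
  split_ifs at hx ⊢
  · linarith [dist_le_of_le hx.le (lt_of_level_eq havoid hy hlev hx).le]
  · linarith [dist_comm (P p) (P q),
      dist_le_of_le hx.le (lt_of_level_eq havoid hy.symm hlev.symm hx).le]

theorem dist_le_snakePotential_sub {k : ℕ} (hbox : ∀ i t, P i t ∈ Icc (0 : ℝ) 1)
    (hy : Pairwise fun i j => P i 1 ≠ P j 1)
    (havoid : ¬ ∃ f : Fin (k + 1) → ι,
      StrictMono (fun t => P (f t) 0) ∧ StrictAnti (fun t => P (f t) 1))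
    {p q : ι} (hpq : snakeKey P p < snakeKey P q) :
    dist (P p) (P q) ≤ snakePotential P q - snakePotential P p := by
  rcases Prod.Lex.lt_iff.1 hpq with hlt | ⟨heq, -⟩
  · exact dist_le_snakePotential_sub_of_level_lt (hbox p) (hbox q) hlt
  · exact dist_le_snakePotential_sub_of_level_eq havoid (hy (ne_of_apply_ne _ hpq.ne)) heq hpq

end KIncreasingTour

open KIncreasingTour

/-- If a point set `P ⊆ [0,1]²` in general position is `k`-increasing
(avoids the decreasing pattern of length `k+1`, i.e. has no `k+1` points with increasing
x-coordinates and decreasing y-coordinates), then there is a closed tour of `P` of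
Euclidean length at most `3k + 2√2` (in particular `O(k)`). -/
theorem k_increasing_tsp_bound {n k : ℕ} [NeZero n]
    (P : Fin n → EuclideanSpace ℝ (Fin 2))
    (hbox : ∀ (i : Fin n) (t : Fin 2), P i t ∈ Set.Icc (0 : ℝ) 1)
    (hgen : ∀ i j : Fin n, i ≠ j → P i 0 ≠ P j 0 ∧ P i 1 ≠ P j 1)
    (havoid : ¬ ∃ f : Fin (k + 1) → Fin n,
      StrictMono (fun t => P (f t) 0) ∧ StrictAnti (fun t => P (f t) 1)) :
    ∃ σ : Equiv.Perm (Fin n),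
      ∑ i : Fin n, dist (P (σ i)) (P (σ (i + 1))) ≤ 3 * k + 2 * Real.sqrt 2 := by
  obtain ⟨m, rfl⟩ := Nat.exists_eq_add_one.2 (NeZero.pos n)
  let σ := Tuple.sort (snakeKey P)
  have hσ : StrictMono (snakeKey P ∘ σ) := (Tuple.monotone_sort _).strictMono_of_injective
    ((snakeKey_injective fun i j h => (hgen i j h).1).comp σ.injective)
  refine ⟨σ, (Fin.sum_dist_add_one_le (P ∘ σ) (snakePotential P ∘ σ) fun i =>
    dist_le_snakePotential_sub hbox (fun i j h => (hgen i j h).2) havoid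
      (hσ Fin.castSucc_lt_succ)).trans ?_⟩
  have hfirst := (snakePotential_mem_Icc (hbox (σ 0))).1
  have hlast := (snakePotential_mem_Icc (hbox (σ (Fin.last m)))).2
  have hlevel : (level P (σ (Fin.last m)) : ℝ) + 1 ≤ k := by exact_mod_cast level_lt havoid _
  have hclose := dist_le_sqrt_two (hbox (σ (Fin.last m))) (hbox (σ 0))
  simp only [Function.comp_apply]
  linarith [Real.sqrt_nonneg 2, (Nat.cast_nonneg _ : (0 : ℝ) ≤ level P (σ 0))]
end

section
/- For every n ≥ 1, there exists a 231-avoiding point set P of 2^n − 1 points on the integer grid [2^n−1]² such that the sum of L∞ nearest-neighbor distances of P is at least n·2^{n−2}. -/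
open scoped ENNReal

/-!
`P_n` is the permutation sending the preorder rank of a node of the perfect binary tree of depth
`n` to its inorder rank. Splitting `P_(n+1)` into its first point, the copy below it and the copy
above it exhibits it as `(1 ⊖ P_n) ⊕ P_n`, and both operations preserve 231-avoidance.

Give every point the height `h` of the copy of `P_(h+1)` whose first point it is. A point of
height `h` in `P_n` has `y`-coordinate between `2^h` and `2^n - 2^h`, and by induction on `n`
every other point of `P_n` is at L∞ distance at least `2^(h-1)` from it (`2^(-1)` read as `1`).
As `P_n` has `2^(n-1-h)` points of height `h`, its nearest-neighbor sum is at least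
`∑_(h<n) 2^(n-1-h) 2^(h-1) ≥ n 2^(n-2)`.
-/

theorem List.Pairwise.rel_get_of_ne {α : Type*} {R : α → α → Prop} (hR : ∀ a b, R a b → R b a)
    {l : List α} (hl : l.Pairwise R) {i j : Fin l.length} (hij : i ≠ j) :
    R (l.get i) (l.get j) := by
  rcases lt_or_gt_of_ne hij with h | h
  · exact hl.rel_get_of_lt h
  · exact hR _ _ (hl.rel_get_of_lt h)

theorem ENNReal.natCast_sum_le_sum_iInf_ne {ι : Type*} [Fintype ι] (w : ι → ℕ) (d : ι → ι → ℕ)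
    (h : ∀ a b, b ≠ a → w a ≤ d a b) :
    ((∑ a, w a : ℕ) : ℝ≥0∞) ≤ ∑ a, ⨅ (b) (_ : b ≠ a), (d a b : ℝ≥0∞) := by
  push_cast
  exact Finset.sum_le_sum fun a _ => le_iInf₂ fun b hb => by exact_mod_cast h a b hb

def linfDist (p q : ℤ × ℤ) : ℕ := max (p.1 - q.1).natAbs (p.2 - q.2).natAbs

@[simp]
theorem linfDist_add_right (p q v : ℤ × ℤ) : linfDist (p + v) (q + v) = linfDist p q := by
  simp [linfDist]

def Avoids231 (S : Set (ℤ × ℤ)) : Prop :=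
  ¬ ∃ a ∈ S, ∃ b ∈ S, ∃ c ∈ S, a.1 < b.1 ∧ b.1 < c.1 ∧ c.2 < a.2 ∧ a.2 < b.2

namespace Avoids231

variable {S T : Set (ℤ × ℤ)}

theorem mono (hT : Avoids231 T) (h : S ⊆ T) : Avoids231 S :=
  fun ⟨a, ha, b, hb, c, hc, habc⟩ => hT ⟨a, h ha, b, h hb, c, h hc, habc⟩

theorem image_add_right (hS : Avoids231 S) (v : ℤ × ℤ) : Avoids231 ((· + v) '' S) := by
  rintro ⟨_, ⟨a, ha, rfl⟩, _, ⟨b, hb, rfl⟩, _, ⟨c, hc, rfl⟩, h₁, h₂, h₃, h₄⟩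
  simp only [Prod.fst_add, Prod.snd_add, add_lt_add_iff_right] at h₁ h₂ h₃ h₄
  exact hS ⟨a, ha, b, hb, c, hc, h₁, h₂, h₃, h₄⟩

theorem insert (hS : Avoids231 S) {p : ℤ × ℤ} (hp : ∀ s ∈ S, p.1 < s.1 ∧ s.2 < p.2) :
    Avoids231 (insert p S) := by
  rintro ⟨a, ha, b, hb, c, hc, h₁, h₂, h₃, h₄⟩
  rcases ha with rfl | ha
  · rcases hb with rfl | hb
    · exact h₁.false
    · linarith [(hp b hb).2]
  · rcases hb with rfl | hb
    · linarith [(hp a ha).1]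
    · rcases hc with rfl | hc
      · linarith [(hp a ha).1]
      · exact hS ⟨a, ha, b, hb, c, hc, h₁, h₂, h₃, h₄⟩

theorem union (hS : Avoids231 S) (hT : Avoids231 T)
    (hST : ∀ s ∈ S, ∀ t ∈ T, s.1 < t.1 ∧ s.2 < t.2) : Avoids231 (S ∪ T) := by
  rintro ⟨a, ha, b, hb, c, hc, h₁, h₂, h₃, h₄⟩
  rcases hc with hc | hc
  · rcases hb with hb | hb
    · rcases ha with ha | ha
      · exact hS ⟨a, ha, b, hb, c, hc, h₁, h₂, h₃, h₄⟩
      · linarith [(hST c hc a ha).1]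
    · linarith [(hST c hc b hb).1]
  · rcases ha with ha | ha
    · linarith [(hST a ha c hc).2]
    · rcases hb with hb | hb
      · linarith [(hST b hb a ha).1]
      · exact hT ⟨a, ha, b, hb, c, hc, h₁, h₂, h₃, h₄⟩

end Avoids231

/-- The points of `P_n`, each paired with its height. -/
def treePoints : ℕ → List ((ℤ × ℤ) × ℕ)
  | 0 => []
  | n + 1 => ((1, 2 ^ n), n) ::
      ((treePoints n).map (fun q => (q.1 + (1, 0), q.2)) ++
        (treePoints n).map (fun q => (q.1 + (2 ^ n, 2 ^ n), q.2)))

theorem length_treePoints (n : ℕ) : (treePoints n).length = 2 ^ n - 1 := by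
  induction n with
  | zero => rfl
  | succ n ih =>
    simp only [treePoints, List.length_cons, List.length_append, List.length_map, ih, pow_succ]
    have := n.one_le_two_pow
    omega

theorem mem_treePoints_succ {n : ℕ} {p : (ℤ × ℤ) × ℕ} :
    p ∈ treePoints (n + 1) ↔ p = ((1, 2 ^ n), n) ∨
      (∃ q ∈ treePoints n, p = (q.1 + (1, 0), q.2)) ∨
      ∃ q ∈ treePoints n, p = (q.1 + (2 ^ n, 2 ^ n), q.2) := by
  simp only [treePoints, List.mem_cons, List.mem_append, List.mem_map]
  simp only [eq_comm (a := p)]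

theorem bounds_of_mem_treePoints {n : ℕ} {p : (ℤ × ℤ) × ℕ} (hp : p ∈ treePoints n) :
    p.2 < n ∧ 1 ≤ p.1.1 ∧ p.1.1 < 2 ^ n ∧ 1 ≤ p.1.2 ∧ p.1.2 < 2 ^ n ∧
      2 ^ p.2 ≤ p.1.2 ∧ p.1.2 + 2 ^ p.2 ≤ (2 : ℤ) ^ n := by
  induction n generalizing p with
  | zero => simp [treePoints] at hp
  | succ n ih =>
    have hpow : (2 : ℤ) ^ (n + 1) = 2 * 2 ^ n := by ring
    have hn : (1 : ℤ) ≤ 2 ^ n := one_le_pow₀ (by norm_num)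
    rcases mem_treePoints_succ.1 hp with rfl | ⟨q, hq, rfl⟩ | ⟨q, hq, rfl⟩
    · simp only
      omega
    · have := ih hq
      simp only [Prod.fst_add, Prod.snd_add]
      omega
    · have hq' := ih hq
      have : (2 : ℤ) ^ q.2 ≤ 2 ^ n := pow_le_pow_right₀ (by norm_num) hq'.1.le
      simp only [Prod.fst_add, Prod.snd_add]
      omega

theorem fst_gt_of_snd_gt_of_mem_treePoints {n : ℕ} {p : (ℤ × ℤ) × ℕ} (hp : p ∈ treePoints n)
    (hy : (2 : ℤ) ^ (n - 1) < p.1.2) : (2 : ℤ) ^ (n - 1) < p.1.1 := by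
  cases n with
  | zero => simp [treePoints] at hp
  | succ n =>
    simp only [Nat.add_sub_cancel] at hy ⊢
    rcases mem_treePoints_succ.1 hp with rfl | ⟨q, hq, rfl⟩ | ⟨q, hq, rfl⟩
    · exact absurd hy (lt_irrefl _)
    · have := bounds_of_mem_treePoints hq
      simp only [Prod.snd_add] at hy
      omega
    · have := bounds_of_mem_treePoints hq
      simp only [Prod.fst_add]
      omega

theorem pairwise_ne_treePoints (n : ℕ) :
    (treePoints n).Pairwise (fun p q => p.1.1 ≠ q.1.1 ∧ p.1.2 ≠ q.1.2) := by
  induction n with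
  | zero => exact List.Pairwise.nil
  | succ n ih =>
    have translate (v : ℤ × ℤ) : ((treePoints n).map fun q => (q.1 + v, q.2)).Pairwise
        (fun p q => p.1.1 ≠ q.1.1 ∧ p.1.2 ≠ q.1.2) := ih.map (fun q => (q.1 + v, q.2))
      fun a b h => by simpa only [Prod.fst_add, Prod.snd_add, ne_eq, add_left_inj] using h
    refine List.pairwise_cons.2 ⟨fun q hq => ?_, List.pairwise_append.2
      ⟨translate _, translate _, fun a ha b hb => ?_⟩⟩
    · rcases List.mem_append.1 hq with hq | hq <;> obtain ⟨r, hr, rfl⟩ := List.mem_map.1 hq <;>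
        have := bounds_of_mem_treePoints hr
      all_goals simp only [Prod.fst_add, Prod.snd_add]; omega
    · obtain ⟨a, ha', rfl⟩ := List.mem_map.1 ha
      obtain ⟨b, hb', rfl⟩ := List.mem_map.1 hb
      have := bounds_of_mem_treePoints ha'
      have := bounds_of_mem_treePoints hb'
      simp only [Prod.fst_add, Prod.snd_add]
      omega

theorem avoids231_treePoints (n : ℕ) : Avoids231 {x | ∃ h, (x, h) ∈ treePoints n} := by
  induction n with
  | zero => rintro ⟨a, ⟨h, ha⟩, -⟩; simp [treePoints] at ha
  | succ n ih =>
    refine ((ih.image_add_right (1, 0)).insert (p := (1, 2 ^ n)) ?_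
      |>.union (ih.image_add_right (2 ^ n, 2 ^ n)) ?_).mono ?_
    · rintro _ ⟨x, ⟨h, hx⟩, rfl⟩
      have := bounds_of_mem_treePoints hx
      simp only [Prod.fst_add, Prod.snd_add] at this ⊢
      omega
    · rintro s (rfl | ⟨x, ⟨h, hx⟩, rfl⟩) _ ⟨y, ⟨h', hy⟩, rfl⟩ <;>
        have hy := bounds_of_mem_treePoints hy
      · simp only [Prod.fst_add, Prod.snd_add] at hy ⊢
        omega
      · have hx := bounds_of_mem_treePoints hx
        simp only [Prod.fst_add, Prod.snd_add] at hx hy ⊢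
        omega
    · rintro x ⟨h, hx⟩
      rcases mem_treePoints_succ.1 hx with h | ⟨q, hq, h⟩ | ⟨q, hq, h⟩ <;>
        simp only [Prod.mk.injEq] at h <;> obtain ⟨rfl, rfl⟩ := h
      · exact Or.inl (Set.mem_insert _ _)
      · exact Or.inl (Set.mem_insert_of_mem _ ⟨q.1, ⟨q.2, hq⟩, rfl⟩)
      · exact Or.inr ⟨q.1, ⟨q.2, hq⟩, rfl⟩

theorem le_linfDist_of_mem_treePoints {n : ℕ} {p q : (ℤ × ℤ) × ℕ} (hp : p ∈ treePoints n)
    (hq : q ∈ treePoints n) (hpq : p.1 ≠ q.1) : (2 : ℤ) ^ (p.2 - 1) ≤ linfDist p.1 q.1 := by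
  induction n generalizing p q with
  | zero => simp [treePoints] at hp
  | succ n ih =>
    have hn : (2 : ℤ) ^ (n - 1) ≤ 2 ^ n := pow_le_pow_right₀ (by norm_num) (n.sub_le 1)
    have hp2 : (2 : ℤ) ^ (p.2 - 1) ≤ 2 ^ p.2 := pow_le_pow_right₀ (by norm_num) (p.2.sub_le 1)
    -- Points of different blocks are separated vertically by the margin `2^h`, except that the
    -- first point is separated horizontally from the upper copy and from the points of the lower
    -- copy above its middle line.
    rcases mem_treePoints_succ.1 hp with rfl | ⟨a, ha, rfl⟩ | ⟨a, ha, rfl⟩ <;>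
      rcases mem_treePoints_succ.1 hq with rfl | ⟨b, hb, rfl⟩ | ⟨b, hb, rfl⟩
    · exact absurd rfl hpq
    · have := bounds_of_mem_treePoints hb
      have := fst_gt_of_snd_gt_of_mem_treePoints hb
      have : (2 : ℤ) ^ n = 2 * 2 ^ (n - 1) := by rw [← pow_succ']; congr; omega
      simp only [linfDist, Prod.fst_add, Prod.snd_add]
      omega
    · have := bounds_of_mem_treePoints hb
      simp only [linfDist, Prod.fst_add, Prod.snd_add]
      omega
    · have := bounds_of_mem_treePoints ha
      simp only [linfDist, Prod.fst_add, Prod.snd_add] at hp2 ⊢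
      omega
    · simpa using ih ha hb (by simpa using hpq)
    · have := bounds_of_mem_treePoints ha
      have := bounds_of_mem_treePoints hb
      simp only [linfDist, Prod.fst_add, Prod.snd_add] at hp2 ⊢
      omega
    · have := bounds_of_mem_treePoints ha
      simp only [linfDist, Prod.fst_add, Prod.snd_add] at hp2 ⊢
      omega
    · have := bounds_of_mem_treePoints ha
      have := bounds_of_mem_treePoints hb
      simp only [linfDist, Prod.fst_add, Prod.snd_add] at hp2 ⊢
      omega
    · simpa using ih ha hb (by simpa using hpq)

theorem le_sum_map_treePoints (n : ℕ) :
    n * 2 ^ (n - 2) ≤ ((treePoints n).map fun p => 2 ^ (p.2 - 1)).sum := by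
  induction n with
  | zero => simp
  | succ n ih =>
    simp only [treePoints, List.map_cons, List.map_append, List.map_map, List.sum_cons,
      List.sum_append, Function.comp_def]
    have hpow : 2 ^ (n - 1) ≤ 2 * 2 ^ (n - 2) := by
      rw [← pow_succ']
      exact Nat.pow_le_pow_right (by norm_num) (by omega)
    calc (n + 1) * 2 ^ (n + 1 - 2) = 2 ^ (n - 1) + n * 2 ^ (n - 1) := by
          rw [show n + 1 - 2 = n - 1 by omega]; ring
      _ ≤ 2 ^ (n - 1) + 2 * (n * 2 ^ (n - 2)) := by rw [mul_left_comm]; gcongr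
      _ ≤ _ := by omega

theorem exists_231_avoiding_grid_set_with_large_nn_general (n : ℕ) :
    ∃ P : Fin (2 ^ n - 1) → ℤ × ℤ,
      Function.Injective P ∧
      (∀ i, (P i).1 ∈ Set.Icc (1 : ℤ) (2 ^ n - 1) ∧ (P i).2 ∈ Set.Icc (1 : ℤ) (2 ^ n - 1)) ∧
      (∀ i j, i ≠ j → (P i).1 ≠ (P j).1 ∧ (P i).2 ≠ (P j).2) ∧
      (¬ ∃ a b c : Fin (2 ^ n - 1), (P a).1 < (P b).1 ∧ (P b).1 < (P c).1 ∧
        (P c).2 < (P a).2 ∧ (P a).2 < (P b).2) ∧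
      ((n * 2 ^ (n - 2) : ℕ) : ℝ≥0∞) ≤
        ∑ a : Fin (2 ^ n - 1), ⨅ (b : Fin (2 ^ n - 1)) (_ : b ≠ a),
          ((max ((P a).1 - (P b).1).natAbs ((P a).2 - (P b).2).natAbs : ℕ) : ℝ≥0∞) := by
  have hlen := length_treePoints n
  let Q : Fin (2 ^ n - 1) → (ℤ × ℤ) × ℕ := fun i => (treePoints n).get (i.cast hlen.symm)
  have hQ (i) : Q i ∈ treePoints n := List.get_mem _ _
  have hgen (i j) (hij : i ≠ j) : (Q i).1.1 ≠ (Q j).1.1 ∧ (Q i).1.2 ≠ (Q j).1.2 :=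
    (pairwise_ne_treePoints n).rel_get_of_ne (fun _ _ h => ⟨h.1.symm, h.2.symm⟩)
      (by simpa [Fin.ext_iff] using hij)
  refine ⟨fun i => (Q i).1, fun i j h => by_contra fun hij => (hgen i j hij).1 (congrArg _ h),
    fun i => ?_, hgen, fun ⟨a, b, c, h⟩ => avoids231_treePoints n
      ⟨_, ⟨_, hQ a⟩, _, ⟨_, hQ b⟩, _, ⟨_, hQ c⟩, h⟩, ?_⟩
  · have := bounds_of_mem_treePoints (hQ i)
    simp only [Set.mem_Icc]
    omega
  · have hsum : ∑ i, 2 ^ ((Q i).2 - 1) = ((treePoints n).map fun p => 2 ^ (p.2 - 1)).sum :=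
      (Fin.sum_congr' (fun i => 2 ^ ((treePoints n)[i.1].2 - 1)) hlen.symm).trans
        (Fin.sum_univ_fun_getElem (treePoints n) fun p => 2 ^ (p.2 - 1))
    calc ((n * 2 ^ (n - 2) : ℕ) : ℝ≥0∞) ≤ ((∑ i, 2 ^ ((Q i).2 - 1) : ℕ) : ℝ≥0∞) := by
          rw [hsum]; exact_mod_cast le_sum_map_treePoints n
      _ ≤ _ := ENNReal.natCast_sum_le_sum_iInf_ne _ (fun a b => linfDist (Q a).1 (Q b).1)
          fun a b hba => by
            exact_mod_cast le_linfDist_of_mem_treePoints (hQ a) (hQ b)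
              fun h => (hgen b a hba).1 (congrArg Prod.fst h).symm

/-- For every `n ≥ 1` there is a 231-avoiding point set of `2^n - 1` points
on the integer grid `[2^n - 1]²` (in general position) whose sum of L∞ nearest-neighbor
distances is at least `n · 2^(n-2)`. -/
theorem exists_231_avoiding_grid_set_with_large_nn (n : ℕ) (hn : 1 ≤ n) :
    ∃ P : Fin (2 ^ n - 1) → ℤ × ℤ,
      Function.Injective P ∧
      (∀ i, (P i).1 ∈ Set.Icc (1 : ℤ) (2 ^ n - 1) ∧ (P i).2 ∈ Set.Icc (1 : ℤ) (2 ^ n - 1)) ∧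
      (∀ i j, i ≠ j → (P i).1 ≠ (P j).1 ∧ (P i).2 ≠ (P j).2) ∧
      (¬ ∃ a b c : Fin (2 ^ n - 1), (P a).1 < (P b).1 ∧ (P b).1 < (P c).1 ∧
        (P c).2 < (P a).2 ∧ (P a).2 < (P b).2) ∧
      ((n * 2 ^ (n - 2) : ℕ) : ℝ≥0∞) ≤
        ∑ a : Fin (2 ^ n - 1), ⨅ (b : Fin (2 ^ n - 1)) (_ : b ≠ a),
          ((max ((P a).1 - (P b).1).natAbs ((P a).2 - (P b).2).natAbs : ℕ) : ℝ≥0∞) :=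
  exists_231_avoiding_grid_set_with_large_nn_general n
end

section
/- For each n ∈ ℕ, there is a 321-avoiding set P of 2n points in [0,1]² in general position such that any Manhattan network for P has total length at least n. -/
/-! The `i`-th pair `p_i, q_i` spans a box of width `1 - 1/(2n)` and height `1/(2n)`, and the `n`
boxes lie in disjoint horizontal strips. A monotone path from `p_i` to `q_i` stays in its box,
so the part of the network inside box `i` projects onto both sides of the box: the sum of the
lengths of its two coordinate projections is at least `1`. An axis-parallel segment has one
degenerate projection and projects injectively in the other coordinate, so summed over disjoint
boxes it contributes at most its length. -/

/-- `MonPathIn U p q`: there is a monotone rectilinear (staircase) path from `p` to `q`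
contained in `U`: a polyline of axis-parallel segments whose corner sequence is monotone
in both coordinates. -/
def MonPathIn (U : Set (ℝ × ℝ)) (p q : ℝ × ℝ) : Prop :=
  ∃ (m : ℕ) (c : Fin (m + 1) → ℝ × ℝ),
    c 0 = p ∧ c (Fin.last m) = q ∧
    (∀ i : Fin m, ((c i.castSucc).1 = (c i.succ).1 ∨ (c i.castSucc).2 = (c i.succ).2) ∧
      segment ℝ (c i.castSucc) (c i.succ) ⊆ U) ∧
    (Monotone (fun i => (c i).1) ∨ Antitone (fun i => (c i).1)) ∧
    (Monotone (fun i => (c i).2) ∨ Antitone (fun i => (c i).2))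

open Set MeasureTheory Function
open scoped ENNReal

theorem Fin.exists_mem_uIcc_of_le_of_le {m : ℕ} (f : Fin (m + 2) → ℝ) {x : ℝ}
    (h0 : f 0 ≤ x) (hl : x ≤ f (Fin.last (m + 1))) :
    ∃ i : Fin (m + 1), x ∈ uIcc (f i.castSucc) (f i.succ) := by
  induction m with
  | zero => exact ⟨0, Icc_subset_uIcc ⟨h0, hl⟩⟩
  | succ m ih =>
    by_cases hx : x ≤ f (Fin.last (m + 1)).castSucc
    · obtain ⟨i, hi⟩ := ih (f ∘ Fin.castSucc) h0 hx
      exact ⟨i.castSucc, by rw [Fin.succ_castSucc]; exact hi⟩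
    · exact ⟨Fin.last (m + 1), Icc_subset_uIcc ⟨(not_le.1 hx).le, hl⟩⟩

section Projection

variable {E : Type*} [AddCommGroup E] [Module ℝ E]

theorem Icc_subset_image_of_segment_subset {m : ℕ} (π : E →ₗ[ℝ] ℝ) (c : Fin (m + 2) → E)
    {S : Set E} (hS : ∀ i : Fin (m + 1), segment ℝ (c i.castSucc) (c i.succ) ⊆ S) :
    Icc (π (c 0)) (π (c (Fin.last (m + 1)))) ⊆ π '' S := by
  intro x ⟨h0, hl⟩
  obtain ⟨i, hi⟩ := Fin.exists_mem_uIcc_of_le_of_le (π ∘ c) h0 hl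
  rw [← segment_eq_uIcc] at hi
  have hseg := image_segment ℝ π.toAffineMap (c i.castSucc) (c i.succ)
  simp only [LinearMap.coe_toAffineMap] at hseg
  exact image_mono (hS i) (hseg ▸ hi)

theorem LinearMap.map_eq_of_mem_segment (π : E →ₗ[ℝ] ℝ) {a b z : E} (hab : π a = π b)
    (hz : z ∈ segment ℝ a b) : π z = π a := by
  have hseg := image_segment ℝ π.toAffineMap a b
  simp only [LinearMap.coe_toAffineMap] at hseg
  simpa [hseg, hab] using mem_image_of_mem π hz

theorem volume_image_segment (π : E →ₗ[ℝ] ℝ) (a b : E) :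
    volume (π '' segment ℝ a b) = ENNReal.ofReal (dist (π a) (π b)) := by
  have hseg := image_segment ℝ π.toAffineMap a b
  simp only [LinearMap.coe_toAffineMap] at hseg
  rw [hseg, segment_eq_uIcc, Real.volume_interval, Real.dist_eq, abs_sub_comm]

theorem sum_volume_image_add_le {ι : Type*} [Fintype ι] (π σ : E →ₗ[ℝ] ℝ) {K : Set E}
    (hK : Convex ℝ K) (hπ : InjOn π K) (hσ : ∀ z ∈ K, ∀ w ∈ K, σ z = σ w)
    {T : ι → Set E} (hT : ∀ i, Convex ℝ (T i)) (hdisj : Pairwise (Disjoint on T)) :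
    ∑ i, (volume (π '' (K ∩ T i)) + volume (σ '' (K ∩ T i))) ≤ volume (π '' K) := by
  have hσ0 : ∀ i, volume (σ '' (K ∩ T i)) = 0 := by
    refine fun i => Subsingleton.measure_zero ?_ _
    rintro _ ⟨z, hz, rfl⟩ _ ⟨w, hw, rfl⟩
    exact hσ z hz.1 w hw.1
  have hmeas : ∀ i ∈ Finset.univ, MeasurableSet (π '' (K ∩ T i)) := fun i _ =>
    (((hK.inter (hT i)).linear_image π).ordConnected).measurableSet
  have hdisj' :
      ((Finset.univ : Finset ι) : Set ι).PairwiseDisjoint fun i => π '' (K ∩ T i) := by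
    intro i _ j _ hij
    rw [Function.onFun, disjoint_iff_inter_eq_empty,
      ← hπ.image_inter inter_subset_left inter_subset_left, ← image_empty π]
    congr 1
    exact disjoint_iff_inter_eq_empty.1 ((hdisj hij).mono inter_subset_right inter_subset_right)
  simp only [hσ0, add_zero]
  rw [← measure_biUnion_finset hdisj' hmeas]
  exact measure_mono (iUnion₂_subset fun i _ => image_mono inter_subset_left)

end Projection

noncomputable def projLength (A : Set (ℝ × ℝ)) : ℝ≥0∞ :=
  volume (Prod.fst '' A) + volume (Prod.snd '' A)

theorem projLength_biUnion_le {ι : Type*} (N : Finset ι) (S : ι → Set (ℝ × ℝ)) :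
    projLength (⋃ s ∈ N, S s) ≤ ∑ s ∈ N, projLength (S s) := by
  rw [projLength, image_iUnion₂, image_iUnion₂]
  simp only [projLength, Finset.sum_add_distrib]
  exact add_le_add (measure_biUnion_finset_le _ _) (measure_biUnion_finset_le _ _)

theorem sum_projLength_segment_inter_le {ι : Type*} [Fintype ι] {a b : ℝ × ℝ}
    (hab : a.1 = b.1 ∨ a.2 = b.2) {T : ι → Set (ℝ × ℝ)} (hT : ∀ i, Convex ℝ (T i))
    (hdisj : Pairwise (Disjoint on T)) :
    ∑ i, projLength (segment ℝ a b ∩ T i) ≤ ENNReal.ofReal (dist a b) := by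
  have hfst : ∀ z ∈ segment ℝ a b, a.1 = b.1 → z.1 = a.1 := fun z hz h =>
    (LinearMap.fst ℝ ℝ ℝ).map_eq_of_mem_segment h hz
  have hsnd : ∀ z ∈ segment ℝ a b, a.2 = b.2 → z.2 = a.2 := fun z hz h =>
    (LinearMap.snd ℝ ℝ ℝ).map_eq_of_mem_segment h hz
  rcases hab with hv | hh
  · have hinj : InjOn Prod.snd (segment ℝ a b) := fun z hz w hw hzw =>
      Prod.ext ((hfst z hz hv).trans (hfst w hw hv).symm) hzw
    calc ∑ i, projLength (segment ℝ a b ∩ T i)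
        = ∑ i, (volume (Prod.snd '' (segment ℝ a b ∩ T i)) +
            volume (Prod.fst '' (segment ℝ a b ∩ T i))) := by simp only [projLength, add_comm]
      _ ≤ volume (Prod.snd '' segment ℝ a b) :=
        sum_volume_image_add_le (LinearMap.snd ℝ ℝ ℝ) (LinearMap.fst ℝ ℝ ℝ) (convex_segment a b)
          hinj (fun z hz w hw => (hfst z hz hv).trans (hfst w hw hv).symm) hT hdisj
      _ = ENNReal.ofReal (dist a.2 b.2) := volume_image_segment (LinearMap.snd ℝ ℝ ℝ) a b
      _ ≤ ENNReal.ofReal (dist a b) :=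
        ENNReal.ofReal_le_ofReal (Prod.dist_eq (x := a) (y := b) ▸ le_max_right _ _)
  · have hinj : InjOn Prod.fst (segment ℝ a b) := fun z hz w hw hzw =>
      Prod.ext hzw ((hsnd z hz hh).trans (hsnd w hw hh).symm)
    calc ∑ i, projLength (segment ℝ a b ∩ T i)
        ≤ volume (Prod.fst '' segment ℝ a b) :=
        sum_volume_image_add_le (LinearMap.fst ℝ ℝ ℝ) (LinearMap.snd ℝ ℝ ℝ) (convex_segment a b)
          hinj (fun z hz w hw => (hsnd z hz hh).trans (hsnd w hw hh).symm) hT hdisj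
      _ = ENNReal.ofReal (dist a.1 b.1) := volume_image_segment (LinearMap.fst ℝ ℝ ℝ) a b
      _ ≤ ENNReal.ofReal (dist a b) :=
        ENNReal.ofReal_le_ofReal (Prod.dist_eq (x := a) (y := b) ▸ le_max_left _ _)

theorem MonPathIn.ofReal_add_le_projLength {U : Set (ℝ × ℝ)} {p q : ℝ × ℝ}
    (h : MonPathIn U p q) (h1 : p.1 < q.1) (h2 : p.2 < q.2) :
    ENNReal.ofReal (q.1 - p.1 + (q.2 - p.2)) ≤ projLength (U ∩ Icc p q) := by
  obtain ⟨m, c, h0, hl, hseg, hmx, hmy⟩ := h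
  obtain ⟨m, rfl⟩ : ∃ k, m = k + 1 :=
    Nat.exists_eq_succ_of_ne_zero (by rintro rfl; simp [← h0, ← hl] at h1)
  have hmono1 : Monotone fun j => (c j).1 := hmx.resolve_right fun h =>
    (h (Fin.zero_le (Fin.last _))).not_gt (by simpa [h0, hl] using h1)
  have hmono2 : Monotone fun j => (c j).2 := hmy.resolve_right fun h =>
    (h (Fin.zero_le (Fin.last _))).not_gt (by simpa [h0, hl] using h2)
  have hbox : ∀ j, c j ∈ Icc p q := fun j =>
    ⟨⟨h0 ▸ hmono1 (Fin.zero_le j), h0 ▸ hmono2 (Fin.zero_le j)⟩,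
      ⟨hl ▸ hmono1 (Fin.le_last j), hl ▸ hmono2 (Fin.le_last j)⟩⟩
  have hS : ∀ i : Fin (m + 1), segment ℝ (c i.castSucc) (c i.succ) ⊆ U ∩ Icc p q := fun i =>
    subset_inter (hseg i).2 ((convex_Icc p q).segment_subset (hbox _) (hbox _))
  have hx := Icc_subset_image_of_segment_subset (LinearMap.fst ℝ ℝ ℝ) c hS
  have hy := Icc_subset_image_of_segment_subset (LinearMap.snd ℝ ℝ ℝ) c hS
  simp only [LinearMap.fst_apply, LinearMap.snd_apply, LinearMap.coe_fst, LinearMap.coe_snd,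
    h0, hl] at hx hy
  rw [ENNReal.ofReal_add (by linarith) (by linarith), ← Real.volume_Icc, ← Real.volume_Icc]
  exact add_le_add (measure_mono hx) (measure_mono hy)

theorem sum_add_le_sum_dist_of_monPathIn {ι : Type*} [Fintype ι] {p q : ι → ℝ × ℝ}
    (h1 : ∀ i, (p i).1 < (q i).1) (h2 : ∀ i, (p i).2 < (q i).2)
    (hdisj : Pairwise (Disjoint on fun i => Icc (p i) (q i)))
    {N : Finset ((ℝ × ℝ) × (ℝ × ℝ))} (hN : ∀ s ∈ N, s.1.1 = s.2.1 ∨ s.1.2 = s.2.2)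
    (hpath : ∀ i, MonPathIn (⋃ s ∈ N, segment ℝ s.1 s.2) (p i) (q i)) :
    ∑ i, ((q i).1 - (p i).1 + ((q i).2 - (p i).2)) ≤ ∑ s ∈ N, dist s.1 s.2 := by
  rw [← ENNReal.ofReal_le_ofReal_iff (Finset.sum_nonneg fun s _ => dist_nonneg),
    ENNReal.ofReal_sum_of_nonneg (fun i _ => by linarith [h1 i, h2 i]),
    ENNReal.ofReal_sum_of_nonneg (fun s _ => dist_nonneg)]
  calc ∑ i, ENNReal.ofReal ((q i).1 - (p i).1 + ((q i).2 - (p i).2))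
      ≤ ∑ i, projLength ((⋃ s ∈ N, segment ℝ s.1 s.2) ∩ Icc (p i) (q i)) :=
        Finset.sum_le_sum fun i _ => (hpath i).ofReal_add_le_projLength (h1 i) (h2 i)
    _ ≤ ∑ i, ∑ s ∈ N, projLength (segment ℝ s.1 s.2 ∩ Icc (p i) (q i)) :=
        Finset.sum_le_sum fun i _ => by rw [iUnion₂_inter]; exact projLength_biUnion_le _ _
    _ = ∑ s ∈ N, ∑ i, projLength (segment ℝ s.1 s.2 ∩ Icc (p i) (q i)) := Finset.sum_comm
    _ ≤ ∑ s ∈ N, ENNReal.ofReal (dist s.1 s.2) := Finset.sum_le_sum fun s hs =>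
        sum_projLength_segment_inter_le (hN s hs) (fun i => convex_Icc _ _) hdisj

def hardX (n k : ℕ) : ℕ := if k < n then k + 1 else k + 1 + 2 * n * (n - 1)

def hardY (n k : ℕ) : ℕ := if k < n then 2 * k else 2 * (k - n) + 1

-- `hardPoint n i` and `hardPoint n (n + i)` are the paper's `p_(i+1)` and `q_(i+1)`.
noncomputable def hardPoint (n k : ℕ) : ℝ × ℝ :=
  ((hardX n k : ℝ) / (2 * n ^ 2), (hardY n k : ℝ) / (2 * n))

section HardPoint

variable {n : ℕ}

theorem hardX_strictMono : StrictMono (hardX n) := fun k l hkl => by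
  unfold hardX; split_ifs <;> omega

theorem hardY_injective : Injective (hardY n) := fun k l h => by
  unfold hardY at h; split_ifs at h <;> omega

theorem hardY_of_lt {i : ℕ} (hi : i < n) : hardY n i = 2 * i := if_pos hi

theorem hardY_add (i : ℕ) : hardY n (n + i) = 2 * i + 1 := by
  simp [hardY]

theorem not_hardY_pattern_321 {a b c : ℕ} (hab : a < b) (hbc : b < c)
    (hcb : hardY n c < hardY n b) (hba : hardY n b < hardY n a) : False := by
  unfold hardY at hcb hba; split_ifs at hcb hba <;> omega

theorem hardX_le {k : ℕ} (hk : k < 2 * n) : hardX n k ≤ 2 * n ^ 2 := by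
  have h : 2 * n * (n - 1) + 2 * n = 2 * n ^ 2 := by
    obtain ⟨m, rfl⟩ : ∃ m, n = m + 1 := ⟨n - 1, by omega⟩
    rw [Nat.add_sub_cancel]; ring
  unfold hardX; split_ifs <;> omega

theorem hardY_le {k : ℕ} (hk : k < 2 * n) : hardY n k ≤ 2 * n := by
  unfold hardY; split_ifs <;> omega

theorem hardPoint_mem_unitSquare {k : ℕ} (hk : k < 2 * n) :
    (hardPoint n k).1 ∈ Icc (0 : ℝ) 1 ∧ (hardPoint n k).2 ∈ Icc (0 : ℝ) 1 := by
  have hn : (0 : ℝ) < n := by exact_mod_cast (show 0 < n by omega)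
  have hx : (hardX n k : ℝ) ≤ 2 * n ^ 2 := by exact_mod_cast hardX_le hk
  have hy : (hardY n k : ℝ) ≤ 2 * n := by exact_mod_cast hardY_le hk
  simp only [hardPoint]
  exact ⟨⟨by positivity, (div_le_one (by positivity)).2 hx⟩,
    ⟨by positivity, (div_le_one (by positivity)).2 hy⟩⟩

theorem hardPoint_fst_lt_iff (hn : 0 < n) {k l : ℕ} :
    (hardPoint n k).1 < (hardPoint n l).1 ↔ k < l := by
  rw [hardPoint, hardPoint, div_lt_div_iff_of_pos_right (by positivity), Nat.cast_lt,
    hardX_strictMono.lt_iff_lt]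

theorem hardPoint_snd_le_iff (hn : 0 < n) {k l : ℕ} :
    (hardPoint n k).2 ≤ (hardPoint n l).2 ↔ hardY n k ≤ hardY n l := by
  rw [hardPoint, hardPoint, div_le_div_iff_of_pos_right (by positivity), Nat.cast_le]

theorem hardPoint_snd_lt_iff (hn : 0 < n) {k l : ℕ} :
    (hardPoint n k).2 < (hardPoint n l).2 ↔ hardY n k < hardY n l := by
  simp only [lt_iff_not_ge, hardPoint_snd_le_iff hn]

theorem hardPoint_ne_of_ne {k l : ℕ} (hk : k < 2 * n) (hkl : k ≠ l) :
    (hardPoint n k).1 ≠ (hardPoint n l).1 ∧ (hardPoint n k).2 ≠ (hardPoint n l).2 := by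
  have hn : 0 < n := by omega
  refine ⟨fun h => hkl ?_, fun h => hkl (hardY_injective (n := n) ?_)⟩
  · exact hardX_strictMono.injective (by simpa [hardPoint, hn.ne'] using h)
  · simpa [hardPoint, hn.ne'] using h

theorem not_hardPoint_pattern_321 (hn : 0 < n) {a b c : ℕ} :
    ¬ ((hardPoint n a).1 < (hardPoint n b).1 ∧ (hardPoint n b).1 < (hardPoint n c).1 ∧
      (hardPoint n c).2 < (hardPoint n b).2 ∧ (hardPoint n b).2 < (hardPoint n a).2) := by
  simp only [hardPoint_fst_lt_iff hn, hardPoint_snd_lt_iff hn]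
  exact fun ⟨hab, hbc, hcb, hba⟩ => not_hardY_pattern_321 hab hbc hcb hba

theorem hardPoint_fst_lt_add {i : ℕ} (hi : i < n) :
    (hardPoint n i).1 < (hardPoint n (n + i)).1 :=
  (hardPoint_fst_lt_iff (by omega)).2 (by omega)

theorem hardPoint_snd_lt_add {i : ℕ} (hi : i < n) :
    (hardPoint n i).2 < (hardPoint n (n + i)).2 := by
  rw [hardPoint_snd_lt_iff (by omega), hardY_of_lt hi, hardY_add]
  omega

theorem hardPoint_add_sub_add_sub {i : ℕ} (hi : i < n) :
    (hardPoint n (n + i)).1 - (hardPoint n i).1 +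
      ((hardPoint n (n + i)).2 - (hardPoint n i).2) = 1 := by
  have hn : (0 : ℝ) < n := by exact_mod_cast (show 0 < n by omega)
  simp only [hardPoint, hardX, hardY, if_pos hi, if_neg (show ¬ n + i < n by omega),
    Nat.add_sub_cancel_left]
  push_cast [Nat.cast_sub (show 1 ≤ n by omega)]
  field_simp
  ring

theorem disjoint_Icc_hardPoint {i j : ℕ} (hi : i < n) (hj : j < n) (hij : i ≠ j) :
    Disjoint (Icc (hardPoint n i) (hardPoint n (n + i)))
      (Icc (hardPoint n j) (hardPoint n (n + j))) := by
  rw [Set.disjoint_left]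
  rintro z ⟨hzi, hiz⟩ ⟨hzj, hjz⟩
  have hij' := (hardPoint_snd_le_iff (n := n) (by omega)).1 (hzi.2.trans hjz.2)
  have hji' := (hardPoint_snd_le_iff (n := n) (by omega)).1 (hzj.2.trans hiz.2)
  rw [hardY_of_lt hi, hardY_add] at hij'
  rw [hardY_of_lt hj, hardY_add] at hji'
  omega

end HardPoint

/-- For each `n` there is a 321-avoiding set of `2n` points in `[0,1]²`
in general position such that every Manhattan network for it (a finite collection of
axis-parallel segments whose union connects each pair of points by a monotone
rectilinear path) has total length at least `n`. -/
theorem manhattan_network_lower_bound (n : ℕ) :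
    ∃ P : Fin (2 * n) → ℝ × ℝ,
      (∀ i, (P i).1 ∈ Set.Icc (0 : ℝ) 1 ∧ (P i).2 ∈ Set.Icc (0 : ℝ) 1) ∧
      (∀ i j, i ≠ j → (P i).1 ≠ (P j).1 ∧ (P i).2 ≠ (P j).2) ∧
      (¬ ∃ a b c : Fin (2 * n), (P a).1 < (P b).1 ∧ (P b).1 < (P c).1 ∧
        (P c).2 < (P b).2 ∧ (P b).2 < (P a).2) ∧
      ∀ N : Finset ((ℝ × ℝ) × (ℝ × ℝ)),
        (∀ s ∈ N, s.1.1 = s.2.1 ∨ s.1.2 = s.2.2) →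
        (∀ i j : Fin (2 * n), MonPathIn (⋃ s ∈ N, segment ℝ s.1 s.2) (P i) (P j)) →
        (n : ℝ) ≤ ∑ s ∈ N, dist s.1 s.2 := by
  refine ⟨fun k => hardPoint n k, fun k => hardPoint_mem_unitSquare k.2,
    fun k l hkl => hardPoint_ne_of_ne k.2 (Fin.val_injective.ne hkl), ?_, fun N hN hpath => ?_⟩
  · rintro ⟨a, b, c, h⟩
    exact not_hardPoint_pattern_321 (by have := a.2; omega) h
  · calc (n : ℝ) = ∑ i : Fin n, ((hardPoint n (n + i)).1 - (hardPoint n i).1 +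
          ((hardPoint n (n + i)).2 - (hardPoint n i).2)) := by
          simp [hardPoint_add_sub_add_sub]
      _ ≤ ∑ s ∈ N, dist s.1 s.2 :=
        sum_add_le_sum_dist_of_monPathIn (fun i => hardPoint_fst_lt_add i.2)
          (fun i => hardPoint_snd_lt_add i.2)
          (fun i j hij => disjoint_Icc_hardPoint i.2 j.2 (Fin.val_injective.ne hij)) hN
          (fun i => hpath ⟨i, by omega⟩ ⟨n + i, by omega⟩)
end
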